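/- Let 𝓜 be an (s,η)-quasi-measurement on a finite-dimensional complex Hilbert space A, given by 𝓜(ρ) = (|A|/s)·∑_{i=1}^s |i⟩⟨χ_i| ρ |χ_i⟩⟨i| with unit vectors χ_i satisfying (|A|/s)·∑_{i=1}^s |χ_i⟩⟨χ_i| ≤ η·I_A. Then for every Hermitian matrix ζ on A: ‖𝓜(ζ)‖₁ ≤ η·‖ζ‖₁. -/

import Mathlib

open scoped BigOperators Kronecker Classical ComplexOrder
open Matrix MeasureTheory

noncomputable section

/-- Outer product `|v⟩⟨v|`. -/
def outer {A : Type*} [Fintype A] (v : A → ℂ) : Matrix A A ℂ :=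
  Matrix.of fun i j => v i * star (v j)

/-- Trace norm `‖X‖₁ = Tr √(XᴴX)`. -/
def traceNorm {A : Type*} [Fintype A] [DecidableEq A] (X : Matrix A A ℂ) : ℝ :=
  (((Matrix.posSemidef_conjTranspose_mul_self X).1.eigenvectorUnitary : Matrix A A ℂ) *
    diagonal (((↑) : ℝ → ℂ) ∘ (√·) ∘ (Matrix.posSemidef_conjTranspose_mul_self X).1.eigenvalues) *
    (star (Matrix.posSemidef_conjTranspose_mul_self X).1.eigenvectorUnitary : Matrix A A ℂ)).trace.re

/-- Frobenius norm `‖X‖₂`. -/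
def frobNorm {A : Type*} [Fintype A] (X : Matrix A A ℂ) : ℝ :=
  Real.sqrt ((Xᴴ * X).trace.re)

/-- Operator norm (largest singular value) `‖X‖_∞`. -/
def opNorm {A : Type*} [Fintype A] [DecidableEq A] (X : Matrix A A ℂ) : ℝ :=
  ‖Matrix.toEuclideanCLM (𝕜 := ℂ) X‖

instance matrixMeasurableSpace {m n : Type*} : MeasurableSpace (Matrix m n ℂ) :=
  inferInstanceAs (MeasurableSpace (m → n → ℂ))

/-- A measurement superoperator (given by its POVM elements `Ms`) applied to the second
factor of a bipartite operator, tensored with the identity on the first factor `W`. -/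
def measApply {W A X : Type*} [Fintype A] [DecidableEq X]
    (Ms : X → Matrix A A ℂ) (ρ : Matrix (W × A) (W × A) ℂ) :
    Matrix (W × X) (W × X) ℂ :=
  Matrix.of fun p q =>
    if p.2 = q.2 then ∑ a : A, ∑ a' : A, Ms p.2 a a' * ρ (p.1, a') (q.1, a) else 0

/-- A measurement superoperator applied to an operator (no side register). -/
def measApply0 {A X : Type*} [Fintype A] [DecidableEq X]
    (Ms : X → Matrix A A ℂ) (ρ : Matrix A A ℂ) : Matrix X X ℂ :=
  Matrix.of fun i j => if i = j then ∑ a : A, ∑ a' : A, Ms i a a' * ρ a' a else 0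

/-- The elements `Ms` form a POVM: each is positive semidefinite and they sum to `I`. -/
def IsPOVM {A X : Type*} [Fintype A] [Fintype X] [DecidableEq A]
    (Ms : X → Matrix A A ℂ) : Prop :=
  (∀ i, (Ms i).PosSemidef) ∧ ∑ i, Ms i = 1

/-- The tuple of unit vectors `χ` defines an `(s,η)`-quasi-measurement:
`(|A|/s) ∑ᵢ |χᵢ⟩⟨χᵢ| ≤ η I`. -/
def IsQuasiTuple {A : Type*} [Fintype A] [DecidableEq A] (s : ℕ) (η : ℝ)
    (χ : Fin s → A → ℂ) : Prop :=
  (∀ i, ∑ a, Complex.normSq (χ i a) = 1) ∧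
  ((η : ℂ) • (1 : Matrix A A ℂ) -
    ((Fintype.card A : ℂ) / (s : ℂ)) • ∑ i, outer (χ i)).PosSemidef

/-- The kernel elements `(|A|/s)|χᵢ⟩⟨χᵢ|` of an `(s,η)`-quasi-measurement. -/
def quasiKernel {A : Type*} [Fintype A] (s : ℕ) (χ : Fin s → A → ℂ) :
    Fin s → Matrix A A ℂ :=
  fun i => ((Fintype.card A : ℂ) / (s : ℂ)) • outer (χ i)

/-! For Hermitian `ζ` both `|ζ| + ζ` and `|ζ| - ζ` are positive, and the trace of a product of
positive matrices is nonnegative. Hence the `i`-th diagonal entry `tr (Kᵢ ζ)` of the output has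
modulus at most `tr (Kᵢ |ζ|)`, and summing over `i` with `∑ Kᵢ ≤ η I` gives
`‖𝓜(ζ)‖₁ ≤ η tr |ζ| = η ‖ζ‖₁`. -/

open scoped MatrixOrder

namespace Matrix

variable {n 𝕜 : Type*} [Fintype n] [RCLike 𝕜]

lemma trace_mul_nonneg {M P : Matrix n n 𝕜} (hM : 0 ≤ M) (hP : 0 ≤ P) : 0 ≤ (M * P).trace := by
  have hRPR : 0 ≤ CFC.sqrt M * P * CFC.sqrt M :=
    conjugate_nonneg_of_nonneg hP (CFC.sqrt_nonneg M)
  rw [← CFC.sqrt_mul_sqrt_self M hM, mul_assoc, trace_mul_comm]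
  exact (nonneg_iff_posSemidef.mp hRPR).trace_nonneg

lemma trace_mul_le_trace_mul {M N P : Matrix n n 𝕜} (hMN : M ≤ N) (hP : 0 ≤ P) :
    (M * P).trace ≤ (N * P).trace := by
  rw [← sub_nonneg, ← trace_sub, ← sub_mul]
  exact trace_mul_nonneg (sub_nonneg.mpr hMN) hP

variable [DecidableEq n]

lemma cfcAbs_diagonal (d : n → 𝕜) :
    CFC.abs (diagonal d) = diagonal fun i => (‖d i‖ : 𝕜) := by
  rw [CFC.abs, CFC.sqrt_eq_iff _ _ (star_mul_self_nonneg _) ?_]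
  · rw [star_eq_conjTranspose, diagonal_conjTranspose, diagonal_mul_diagonal,
      diagonal_mul_diagonal]
    congr 1
    funext i
    simp [RCLike.conj_mul, sq]
  · exact nonneg_iff_posSemidef.mpr (PosSemidef.diagonal fun i => by simp)

lemma IsHermitian.cfcAbs_sub_self_nonneg {A : Matrix n n 𝕜} (hA : A.IsHermitian) :
    0 ≤ CFC.abs A - A := by
  rw [CFC.abs_sub_self A hA.isSelfAdjoint]
  exact smul_nonneg zero_le_two (CFC.negPart_nonneg A)

lemma IsHermitian.cfcAbs_add_self_nonneg {A : Matrix n n 𝕜} (hA : A.IsHermitian) :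
    0 ≤ CFC.abs A + A := by
  rw [CFC.abs_add_self A hA.isSelfAdjoint]
  exact smul_nonneg zero_le_two (CFC.posPart_nonneg A)

lemma norm_trace_mul_le_re_trace_mul_cfcAbs {M A : Matrix n n 𝕜} (hM : 0 ≤ M)
    (hA : A.IsHermitian) : ‖(M * A).trace‖ ≤ RCLike.re (M * CFC.abs A).trace := by
  obtain ⟨hp, hp_im⟩ := RCLike.nonneg_iff.mp (trace_mul_nonneg hM hA.cfcAbs_add_self_nonneg)
  obtain ⟨hq, hq_im⟩ := RCLike.nonneg_iff.mp (trace_mul_nonneg hM hA.cfcAbs_sub_self_nonneg)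
  rw [mul_add, trace_add] at hp hp_im
  rw [mul_sub, trace_sub] at hq hq_im
  simp only [map_add, map_sub] at hp hp_im hq hq_im
  rw [← RCLike.re_add_im (M * A).trace, show RCLike.im (M * A).trace = 0 by linarith,
    RCLike.ofReal_zero, zero_mul, add_zero, RCLike.norm_ofReal, abs_le]
  constructor <;> linarith

end Matrix

section

variable {n : Type*} [Fintype n] [DecidableEq n]

lemma traceNorm_eq_re_trace_cfcAbs (X : Matrix n n ℂ) :
    traceNorm X = (CFC.abs X).trace.re := by
  have hXX := posSemidef_conjTranspose_mul_self X
  rw [traceNorm, CFC.abs, show star X * X = Xᴴ * X from rfl, CFC.sqrt_eq_real_sqrt _ hXX.nonneg,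
    cfcₙ_eq_cfc, hXX.1.cfc_eq, IsHermitian.cfc, Unitary.conjStarAlgAut_apply]
  rfl

lemma traceNorm_diagonal (d : n → ℂ) : traceNorm (diagonal d) = ∑ i, ‖d i‖ := by
  simp [traceNorm_eq_re_trace_cfcAbs, cfcAbs_diagonal, trace_diagonal]

end

lemma measApply0_eq_diagonal_trace {n ι : Type*} [Fintype n] [DecidableEq ι]
    (Ms : ι → Matrix n n ℂ) (ρ : Matrix n n ℂ) :
    measApply0 Ms ρ = diagonal fun i => (Ms i * ρ).trace := by
  ext i j
  by_cases h : i = j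
  · subst h
    simp [measApply0, trace, mul_apply]
  · simp [measApply0, h]

theorem traceNorm_measApply0_le {n ι : Type*} [Fintype n] [DecidableEq n] [Fintype ι]
    [DecidableEq ι] {Ms : ι → Matrix n n ℂ} (hMs : ∀ i, 0 ≤ Ms i) {η : ℝ}
    (hsum : ∑ i, Ms i ≤ (η : ℂ) • 1) {ζ : Matrix n n ℂ} (hζ : ζ.IsHermitian) :
    traceNorm (measApply0 Ms ζ) ≤ η * traceNorm ζ := by
  rw [measApply0_eq_diagonal_trace, traceNorm_diagonal, traceNorm_eq_re_trace_cfcAbs]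
  calc ∑ i, ‖(Ms i * ζ).trace‖
      ≤ ∑ i, (Ms i * CFC.abs ζ).trace.re :=
        Finset.sum_le_sum fun i _ => norm_trace_mul_le_re_trace_mul_cfcAbs (hMs i) hζ
    _ = ((∑ i, Ms i) * CFC.abs ζ).trace.re := by simp [Finset.sum_mul, trace_sum]
    _ ≤ ((η : ℂ) • 1 * CFC.abs ζ).trace.re :=
        Complex.re_le_re (trace_mul_le_trace_mul hsum (CFC.abs_nonneg ζ))
    _ = η * (CFC.abs ζ).trace.re := by simp

lemma quasiKernel_nonneg {A : Type*} [Fintype A] (s : ℕ) (χ : Fin s → A → ℂ) (i : Fin s) :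
    0 ≤ quasiKernel s χ i :=
  nonneg_iff_posSemidef.mpr ((posSemidef_vecMulVec_self_star (χ i)).smul (by positivity))

theorem quasi_measurement_trace_norm_bound_general
    {A : Type*} [Fintype A] [DecidableEq A]
    (s : ℕ) (η : ℝ)
    (χ : Fin s → A → ℂ) (hχ : IsQuasiTuple s η χ)
    (ζ : Matrix A A ℂ) (hζ : ζ.IsHermitian) :
    traceNorm (measApply0 (quasiKernel s χ) ζ) ≤ η * traceNorm ζ :=
  traceNorm_measApply0_le (quasiKernel_nonneg s χ)
    (by simpa only [Matrix.le_iff, quasiKernel, Finset.smul_sum] using hχ.2) hζ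

/-- An `(s,η)`-quasi-measurement increases the trace norm of a Hermitian operator
by a factor of at most `η`. -/
theorem quasi_measurement_trace_norm_bound
    {A : Type*} [Fintype A] [DecidableEq A]
    (s : ℕ) (hs : 1 ≤ s) (η : ℝ) (hη : 0 < η)
    (χ : Fin s → A → ℂ) (hχ : IsQuasiTuple s η χ)
    (ζ : Matrix A A ℂ) (hζ : ζ.IsHermitian) :
    traceNorm (measApply0 (quasiKernel s χ) ζ) ≤ η * traceNorm ζ :=
  quasi_measurement_trace_norm_bound_general s η χ hχ ζ hζ
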